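/- In ℍ × ℍ with metric equal to one half of the product hyperbolic metric, the distance between the leaf parametrized by (t,x,y) ↦ (x + i e^{s₀+t}/√2, y + i e^{s₀-t}/√2) and the leaf parametrized with parameter s₁ equals |s₁ - s₀|. -/
import Mathlib


open Complex

/-- The distance on ℍ × ℍ coming from one half of the product hyperbolic metric:
each factor carries `(1/√2)` times the hyperbolic distance, and the product distance
is `√(ρ₁² + ρ₂²)`. -/
noncomputable def halfProdDist (p q : UpperHalfPlane × UpperHalfPlane) : ℝ :=
  Real.sqrt ((dist p.1 q.1 / Real.sqrt 2) ^ 2 + (dist p.2 q.2 / Real.sqrt 2) ^ 2)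

/-- The leaf with parameter `s`, parametrized by
`(t,x,y) ↦ (x + i e^{s+t}/√2, y + i e^{s-t}/√2)`. -/
noncomputable def leaf (s : ℝ) : Set (UpperHalfPlane × UpperHalfPlane) :=
  {p | ∃ t x y : ℝ,
    (p.1 : ℂ) = (x : ℂ) + (Real.exp (s + t) / Real.sqrt 2 : ℝ) * I ∧
    (p.2 : ℂ) = (y : ℂ) + (Real.exp (s - t) / Real.sqrt 2 : ℝ) * I}

noncomputable def upt (x a : ℝ) (ha : 0 < a) : UpperHalfPlane := ⟨⟨x, a⟩, ha⟩

lemma upt_coe (x a : ℝ) (ha : 0 < a) :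
    (upt x a ha : ℂ) = (x : ℂ) + (a : ℝ) * I := by
  apply Complex.ext <;> simp [upt, UpperHalfPlane.coe]

lemma upt_im (x a : ℝ) (ha : 0 < a) : (upt x a ha).im = a := rfl

lemma upt_re (x a : ℝ) (ha : 0 < a) : (upt x a ha).re = x := rfl

lemma im_of_coe (z : UpperHalfPlane) (x a : ℝ) (h : (z : ℂ) = (x : ℂ) + (a : ℝ) * I) :
    z.im = a := by
  have : z.im = ((z : ℂ)).im := rfl
  rw [this, h]; simp

lemma log_exp_div (s : ℝ) :
    Real.log (Real.exp s / Real.sqrt 2) = s - Real.log (Real.sqrt 2) := by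
  rw [Real.log_div (Real.exp_ne_zero s) (by positivity), Real.log_exp]

lemma lower_bound (s₀ s₁ : ℝ) (p q : UpperHalfPlane × UpperHalfPlane)
    (hp : p ∈ leaf s₀) (hq : q ∈ leaf s₁) : |s₁ - s₀| ≤ halfProdDist p q := by
  obtain ⟨t, x, y, h1, h2⟩ := hp
  obtain ⟨t', x', y', h1', h2'⟩ := hq
  have i1 := im_of_coe _ _ _ h1
  have i2 := im_of_coe _ _ _ h2
  have i1' := im_of_coe _ _ _ h1'
  have i2' := im_of_coe _ _ _ h2'
  have d1 : |(s₀ + t) - (s₁ + t')| ≤ dist p.1 q.1 := by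
    have := UpperHalfPlane.dist_log_im_le p.1 q.1
    rwa [i1, i1', Real.dist_eq, log_exp_div, log_exp_div,
      show (s₀ + t) - Real.log (Real.sqrt 2) - ((s₁ + t') - Real.log (Real.sqrt 2))
        = (s₀ + t) - (s₁ + t') by ring] at this
  have d2 : |(s₀ - t) - (s₁ - t')| ≤ dist p.2 q.2 := by
    have := UpperHalfPlane.dist_log_im_le p.2 q.2
    rwa [i2, i2', Real.dist_eq, log_exp_div, log_exp_div,
      show (s₀ - t) - Real.log (Real.sqrt 2) - ((s₁ - t') - Real.log (Real.sqrt 2))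
        = (s₀ - t) - (s₁ - t') by ring] at this
  have hd1 : ((s₀ + t) - (s₁ + t'))^2 ≤ (dist p.1 q.1)^2 := by
    calc ((s₀ + t) - (s₁ + t'))^2 = |(s₀ + t) - (s₁ + t')|^2 := (_root_.sq_abs _).symm
      _ ≤ _ := pow_le_pow_left₀ (abs_nonneg _) d1 2
  have hd2 : ((s₀ - t) - (s₁ - t'))^2 ≤ (dist p.2 q.2)^2 := by
    calc ((s₀ - t) - (s₁ - t'))^2 = |(s₀ - t) - (s₁ - t')|^2 := (_root_.sq_abs _).symm
      _ ≤ _ := pow_le_pow_left₀ (abs_nonneg _) d2 2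
  rw [halfProdDist, Real.le_sqrt (abs_nonneg _)]
  have hs2 : (Real.sqrt 2)^2 = 2 := Real.sq_sqrt (by norm_num)
  rw [div_pow, div_pow, hs2, _root_.sq_abs]
  nlinarith [sq_nonneg (((s₀ + t) - (s₁ + t')) - ((s₀ - t) - (s₁ - t')))]
  positivity

/-- The distance between the leaves with parameters `s₀` and `s₁` in ℍ × ℍ (with one
half of the product hyperbolic metric) equals `|s₁ - s₀|`. -/
theorem dist_between_leaves (s₀ s₁ : ℝ) :
    sInf {r : ℝ | ∃ p ∈ leaf s₀, ∃ q ∈ leaf s₁, r = halfProdDist p q} = |s₁ - s₀| := by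
  set S := {r : ℝ | ∃ p ∈ leaf s₀, ∃ q ∈ leaf s₁, r = halfProdDist p q}
  have hpos : ∀ s : ℝ, 0 < Real.exp s / Real.sqrt 2 := fun s => by positivity
  -- explicit witness pair
  set p : UpperHalfPlane × UpperHalfPlane :=
    (upt 0 _ (hpos (s₀ + 0)), upt 0 _ (hpos (s₀ - 0)))
  set q : UpperHalfPlane × UpperHalfPlane :=
    (upt 0 _ (hpos (s₁ + 0)), upt 0 _ (hpos (s₁ - 0)))
  have hp : p ∈ leaf s₀ := ⟨0, 0, 0, upt_coe _ _ _, upt_coe _ _ _⟩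
  have hq : q ∈ leaf s₁ := ⟨0, 0, 0, upt_coe _ _ _, upt_coe _ _ _⟩
  have hdist : halfProdDist p q = |s₁ - s₀| := by
    have hre1 : p.1.re = q.1.re := rfl
    have hre2 : p.2.re = q.2.re := rfl
    have e1 : dist p.1 q.1 = |s₁ - s₀| := by
      rw [UpperHalfPlane.dist_of_re_eq hre1]
      show dist (Real.log (Real.exp (s₀+0) / Real.sqrt 2))
        (Real.log (Real.exp (s₁+0) / Real.sqrt 2)) = _
      rw [Real.dist_eq, log_exp_div, log_exp_div, ← abs_neg]
      ring_nf
    have e2 : dist p.2 q.2 = |s₁ - s₀| := by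
      rw [UpperHalfPlane.dist_of_re_eq hre2]
      show dist (Real.log (Real.exp (s₀-0) / Real.sqrt 2))
        (Real.log (Real.exp (s₁-0) / Real.sqrt 2)) = _
      rw [Real.dist_eq, log_exp_div, log_exp_div, ← abs_neg]
      ring_nf
    rw [halfProdDist, e1, e2]
    have hs2 : (Real.sqrt 2)^2 = 2 := Real.sq_sqrt (by norm_num)
    rw [div_pow, hs2]
    rw [show |s₁ - s₀| ^ 2 / 2 + |s₁ - s₀| ^ 2 / 2 = |s₁ - s₀| ^ 2 by ring]
    exact Real.sqrt_sq (abs_nonneg _)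
  have hmem : |s₁ - s₀| ∈ S := ⟨p, hp, q, hq, hdist.symm⟩
  have hlb : ∀ r ∈ S, |s₁ - s₀| ≤ r := by
    rintro r ⟨p', hp', q', hq', rfl⟩
    exact lower_bound s₀ s₁ p' q' hp' hq'
  exact le_antisymm (csInf_le ⟨|s₁ - s₀|, hlb⟩ hmem) (le_csInf ⟨_, hmem⟩ hlb)
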